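/- arXiv:1710.05559 — 6 statements merged into one kernel-verified Lean document; each statement's English description precedes it below -/
import Mathlib

section
/- Let d ≥ 1, let U : ℝ^d → ℝ be continuously differentiable, and let γ > 0. Then for all x ∈ ℝ^d, ‖H_{γ,c}(x) − ∇U(x)‖ ≤ γ(Σ_{i=1}^d (∂_iU(x))⁴)^{1/2} ≤ γ‖∇U(x)‖², where H_{γ,c}(x) has i-th coordinate ∂_iU(x)/(1 + γ|∂_iU(x)|). -/
/-!
Coordinatewise, `t / (1 + γ|t|) - t = -γ t|t| / (1 + γ|t|)` has absolute value at most `γ t²`;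
summing squares gives the first bound, and `∑ tᵢ⁴ ≤ (∑ tᵢ²)²` gives the second.
-/

open Finset

/-- Applied to `∇U(x)` this is `H_{γ,c}(x)`. -/
noncomputable def coordTamed {ι : Type*} (γ : ℝ) (v : EuclideanSpace ℝ ι) : EuclideanSpace ℝ ι :=
  (WithLp.equiv 2 (ι → ℝ)).symm fun i => v i / (1 + γ * |v i|)

lemma abs_div_one_add_mul_abs_sub_le {γ : ℝ} (hγ : 0 ≤ γ) (t : ℝ) :
    |t / (1 + γ * |t|) - t| ≤ γ * t ^ 2 := by
  have hden : 1 ≤ 1 + γ * |t| := le_add_of_nonneg_right (by positivity)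
  have hpos : 0 < 1 + γ * |t| := one_pos.trans_le hden
  have heq : t / (1 + γ * |t|) - t = -(γ * (t * |t|)) / (1 + γ * |t|) := by
    field_simp
    ring
  calc |t / (1 + γ * |t|) - t| = γ * t ^ 2 / (1 + γ * |t|) := by
        rw [heq, abs_div, abs_neg, abs_of_pos hpos, abs_mul, abs_of_nonneg hγ, abs_mul, abs_abs,
          ← abs_mul, abs_mul_self, sq]
    _ ≤ γ * t ^ 2 := div_le_self (by positivity) hden

lemma norm_coordTamed_sub_le {ι : Type*} [Fintype ι] {γ : ℝ} (hγ : 0 ≤ γ)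
    (v : EuclideanSpace ℝ ι) : ‖coordTamed γ v - v‖ ≤ γ * √(∑ i, v i ^ 4) := by
  have hcoord : ∀ i, (coordTamed γ v - v) i ^ 2 ≤ (γ * v i ^ 2) ^ 2 := fun i => by
    rw [← sq_abs]
    exact pow_le_pow_left₀ (abs_nonneg _) (abs_div_one_add_mul_abs_sub_le hγ (v i)) 2
  calc ‖coordTamed γ v - v‖ = √(∑ i, (coordTamed γ v - v) i ^ 2) := by
        rw [← EuclideanSpace.real_norm_sq_eq, Real.sqrt_sq (norm_nonneg _)]
    _ ≤ √(∑ i, (γ * v i ^ 2) ^ 2) := Real.sqrt_le_sqrt (sum_le_sum fun i _ => hcoord i)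
    _ = √(γ ^ 2 * ∑ i, v i ^ 4) := by
        rw [mul_sum]
        ring_nf
    _ = γ * √(∑ i, v i ^ 4) := by rw [Real.sqrt_mul (sq_nonneg γ), Real.sqrt_sq hγ]

lemma sqrt_sum_pow_four_le_norm_sq {ι : Type*} [Fintype ι] (v : EuclideanSpace ℝ ι) :
    √(∑ i, v i ^ 4) ≤ ‖v‖ ^ 2 := by
  calc √(∑ i, v i ^ 4) = √(∑ i, (v i ^ 2) ^ 2) := by ring_nf
    _ ≤ √((∑ i, v i ^ 2) ^ 2) :=
        Real.sqrt_le_sqrt (sum_sq_le_sq_sum_of_nonneg fun i _ => sq_nonneg _)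
    _ = ‖v‖ ^ 2 := by
        rw [Real.sqrt_sq (by positivity), EuclideanSpace.real_norm_sq_eq]

theorem tulac_tamed_drift_close_general
    (d : ℕ) (U : EuclideanSpace ℝ (Fin d) → ℝ)
    (γ : ℝ) (hγ : 0 < γ) :
    ∀ x : EuclideanSpace ℝ (Fin d),
      ‖((WithLp.equiv 2 (Fin d → ℝ)).symm
            (fun i => gradient U x i / (1 + γ * |gradient U x i|))
          : EuclideanSpace ℝ (Fin d)) - gradient U x‖
          ≤ γ * Real.sqrt (∑ i, gradient U x i ^ 4)
      ∧ γ * Real.sqrt (∑ i, gradient U x i ^ 4) ≤ γ * ‖gradient U x‖ ^ 2 :=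
  fun x => ⟨norm_coordTamed_sub_le hγ.le (gradient U x),
    mul_le_mul_of_nonneg_left (sqrt_sum_pow_four_le_norm_sq (gradient U x)) hγ.le⟩

/-- The coordinate-wise tamed drift H_{γ,c}, with i-th coordinate
∂_iU(x)/(1 + γ|∂_iU(x)|), satisfies
‖H_{γ,c}(x) − ∇U(x)‖ ≤ γ(Σ_i (∂_iU(x))⁴)^{1/2} ≤ γ‖∇U(x)‖². -/
theorem tulac_tamed_drift_close
    (d : ℕ) (hd : 1 ≤ d) (U : EuclideanSpace ℝ (Fin d) → ℝ)
    (hU : ContDiff ℝ 1 U) (γ : ℝ) (hγ : 0 < γ) :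
    ∀ x : EuclideanSpace ℝ (Fin d),
      ‖((WithLp.equiv 2 (Fin d → ℝ)).symm
            (fun i => gradient U x i / (1 + γ * |gradient U x i|))
          : EuclideanSpace ℝ (Fin d)) - gradient U x‖
          ≤ γ * Real.sqrt (∑ i, gradient U x i ^ 4)
      ∧ γ * Real.sqrt (∑ i, gradient U x i ^ 4) ≤ γ * ‖gradient U x‖ ^ 2 :=
  tulac_tamed_drift_close_general d U γ hγ
end

section
/- Let d ≥ 1, let U : ℝ^d → ℝ be continuously differentiable and let γ > 0. Suppose there exist κ > 0 and M₁ ≥ 0 such that ⟨x, ∇U(x)⟩ ≥ κ‖x‖‖∇U(x)‖ whenever ‖x‖ ≥ M₁, and there exist C > 0 and M₂ ≥ 0 such that ‖∇U(x)‖ ≥ C whenever ‖x‖ ≥ M₂. Then for all x ∈ ℝ^d with ‖x‖ ≥ max(κ^{-1}, M₁, M₂), one has ⟨x/‖x‖, H_γ(x)⟩ − (γ/(2‖x‖))‖H_γ(x)‖² ≥ κC/(2(1 + γC)), where H_γ(x) = ∇U(x)/(1 + γ‖∇U(x)‖). -/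
/-!
Write `H = v / (1 + γ‖v‖)` for `v = ∇U(x)`. The cone condition gives `⟨x/‖x‖, H⟩ ≥ κ‖H‖`, while
`γ‖H‖ < 1` and `‖x‖⁻¹ ≤ κ` bound the correction term by `κ‖H‖/2`. Finally
`‖H‖ = g/(1 + γg)` is increasing in `g = ‖∇U(x)‖ ≥ C`.
-/

open RealInnerProductSpace

section Taming

variable {E : Type*} [NormedAddCommGroup E] [InnerProductSpace ℝ E]

/-- In the paper's notation, `H_γ(x) = tame γ (∇U(x))`. -/
noncomputable def tame (γ : ℝ) (v : E) : E := (1 + γ * ‖v‖)⁻¹ • v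

lemma norm_tame {γ : ℝ} (hγ : 0 ≤ γ) (v : E) : ‖tame γ v‖ = ‖v‖ / (1 + γ * ‖v‖) := by
  have : 0 < 1 + γ * ‖v‖ := by positivity
  rw [tame, norm_smul, Real.norm_eq_abs, abs_of_pos (inv_pos.mpr this), inv_mul_eq_div]

lemma mul_norm_tame_le_one {γ : ℝ} (hγ : 0 ≤ γ) (v : E) : γ * ‖tame γ v‖ ≤ 1 := by
  have : 0 < 1 + γ * ‖v‖ := by positivity
  rw [norm_tame hγ, mul_div_assoc', div_le_one this]
  linarith

lemma div_one_add_mul_le_div_one_add_mul {γ s t : ℝ} (hγ : 0 ≤ γ) (hs : 0 ≤ s) (hst : s ≤ t) :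
    s / (1 + γ * s) ≤ t / (1 + γ * t) := by
  rw [div_le_div_iff₀ (by positivity) (by nlinarith)]
  nlinarith

lemma mul_norm_tame_le_inner {γ κ : ℝ} (hγ : 0 ≤ γ) {x v : E} (hx : x ≠ 0)
    (hcone : κ * ‖x‖ * ‖v‖ ≤ ⟪x, v⟫) : κ * ‖tame γ v‖ ≤ ⟪‖x‖⁻¹ • x, tame γ v⟫ := by
  have hr : 0 < ‖x‖ := norm_pos_iff.mpr hx
  have ha : 0 < 1 + γ * ‖v‖ := by positivity
  calc κ * ‖tame γ v‖ = ‖x‖⁻¹ * (1 + γ * ‖v‖)⁻¹ * (κ * ‖x‖ * ‖v‖) := by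
        rw [norm_tame hγ]
        field_simp
    _ ≤ ‖x‖⁻¹ * (1 + γ * ‖v‖)⁻¹ * ⟪x, v⟫ := by gcongr
    _ = ⟪‖x‖⁻¹ • x, tame γ v⟫ := by
        rw [tame, real_inner_smul_left, real_inner_smul_right, mul_assoc]

theorem half_mul_norm_tame_le_drift {γ κ : ℝ} (hγ : 0 ≤ γ) (hκ : 0 < κ) {x v : E}
    (hx : κ⁻¹ ≤ ‖x‖) (hcone : κ * ‖x‖ * ‖v‖ ≤ ⟪x, v⟫) :
    κ / 2 * ‖tame γ v‖ ≤ ⟪‖x‖⁻¹ • x, tame γ v⟫ - γ / (2 * ‖x‖) * ‖tame γ v‖ ^ 2 := by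
  have hr : 0 < ‖x‖ := (inv_pos.mpr hκ).trans_le hx
  have hinner := mul_norm_tame_le_inner hγ (norm_pos_iff.mp hr) hcone
  have hrκ : ‖x‖⁻¹ ≤ κ := inv_le_of_inv_le₀ hκ hx
  have hcorr : γ / (2 * ‖x‖) * ‖tame γ v‖ ^ 2 ≤ κ / 2 * ‖tame γ v‖ :=
    calc γ / (2 * ‖x‖) * ‖tame γ v‖ ^ 2 = ‖x‖⁻¹ / 2 * ‖tame γ v‖ * (γ * ‖tame γ v‖) := by
          field_simp
      _ ≤ κ / 2 * ‖tame γ v‖ * 1 := by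
          gcongr
          exact mul_norm_tame_le_one hγ v
      _ = κ / 2 * ‖tame γ v‖ := mul_one _
  linarith

end Taming

theorem tula_drift_condition_Hgamma_general
    (d : ℕ) (U : EuclideanSpace ℝ (Fin d) → ℝ)
    (γ : ℝ) (hγ : 0 < γ)
    (κ : ℝ) (hκ : 0 < κ) (M₁ : ℝ)
    (h1 : ∀ x : EuclideanSpace ℝ (Fin d), M₁ ≤ ‖x‖ →
      κ * ‖x‖ * ‖gradient U x‖ ≤ ⟪x, gradient U x⟫)
    (C : ℝ) (hC : 0 < C) (M₂ : ℝ)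
    (h2 : ∀ x : EuclideanSpace ℝ (Fin d), M₂ ≤ ‖x‖ → C ≤ ‖gradient U x‖) :
    ∀ x : EuclideanSpace ℝ (Fin d), max κ⁻¹ (max M₁ M₂) ≤ ‖x‖ →
      κ * C / (2 * (1 + γ * C)) ≤
        ⟪‖x‖⁻¹ • x, (1 + γ * ‖gradient U x‖)⁻¹ • gradient U x⟫
          - γ / (2 * ‖x‖) * ‖(1 + γ * ‖gradient U x‖)⁻¹ • gradient U x‖ ^ 2 := by
  intro x hx
  simp only [max_le_iff] at hx
  obtain ⟨hxκ, hxM₁, hxM₂⟩ := hx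
  have hdrift := half_mul_norm_tame_le_drift hγ.le hκ hxκ (h1 x hxM₁)
  have hnorm : C / (1 + γ * C) ≤ ‖tame γ (gradient U x)‖ := by
    rw [norm_tame hγ.le]
    exact div_one_add_mul_le_div_one_add_mul hγ.le hC.le (h2 x hxM₂)
  calc κ * C / (2 * (1 + γ * C)) = κ / 2 * (C / (1 + γ * C)) :=
        (div_mul_div_comm _ _ _ _).symm
    _ ≤ κ / 2 * ‖tame γ (gradient U x)‖ := mul_le_mul_of_nonneg_left hnorm (by positivity)
    _ ≤ _ := hdrift

/-- Under a radial lower bound on ⟨x, ∇U(x)⟩ and a lower bound on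
‖∇U(x)‖ at infinity, the tamed drift H_γ satisfies the discrete drift condition
⟨x/‖x‖, H_γ(x)⟩ − (γ/(2‖x‖))‖H_γ(x)‖² ≥ κC/(2(1 + γC)) far from the origin. -/
theorem tula_drift_condition_Hgamma
    (d : ℕ) (hd : 1 ≤ d) (U : EuclideanSpace ℝ (Fin d) → ℝ)
    (hU : ContDiff ℝ 1 U) (γ : ℝ) (hγ : 0 < γ)
    (κ : ℝ) (hκ : 0 < κ) (M₁ : ℝ) (hM₁ : 0 ≤ M₁)
    (h1 : ∀ x : EuclideanSpace ℝ (Fin d), M₁ ≤ ‖x‖ →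
      κ * ‖x‖ * ‖gradient U x‖ ≤ ⟪x, gradient U x⟫)
    (C : ℝ) (hC : 0 < C) (M₂ : ℝ) (hM₂ : 0 ≤ M₂)
    (h2 : ∀ x : EuclideanSpace ℝ (Fin d), M₂ ≤ ‖x‖ → C ≤ ‖gradient U x‖) :
    ∀ x : EuclideanSpace ℝ (Fin d), max κ⁻¹ (max M₁ M₂) ≤ ‖x‖ →
      κ * C / (2 * (1 + γ * C)) ≤
        ⟪‖x‖⁻¹ • x, (1 + γ * ‖gradient U x‖)⁻¹ • gradient U x⟫
          - γ / (2 * ‖x‖) * ‖(1 + γ * ‖gradient U x‖)⁻¹ • gradient U x‖ ^ 2 :=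
  tula_drift_condition_Hgamma_general d U γ hγ κ hκ M₁ h1 C hC M₂ h2
end

section
/- Let d ≥ 1, y ∈ ℝ^d, a > 0 and γ > 0. Then (2π)^{-d/2} ∫_{ℝ^d} exp(a(1 + ‖y + √(2γ)z‖²)^{1/2}) e^{-‖z‖²/2} dz ≤ e^{a²γ} exp(a(1 + ‖y‖² + 2γd)^{1/2}). -/
/-!
Writing `X = √(1 + ‖y + c z‖²)`, the inequality `a X ≤ a² / (4s) + s X²` reduces the claim to the
Gaussian integral of `exp (s ‖y + c z‖²)`, which is explicit: after normalisation it equals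
`(1 - 2sc²)^(-n/2) exp (s ‖y‖² / (1 - 2sc²))`. With `s = q / (1 + 2qc²)` and
`(1 + 2qc²)^(n/2) ≤ exp (n q c²)` the exponent becomes `a²c²/2 + a²/(4q) + q (1 + ‖y‖² + c² n)`,
and `q = a / (2 √(1 + ‖y‖² + c² n))` gives the bound.
-/

open Real MeasureTheory
open scoped RealInnerProductSpace

theorem mul_le_sq_div_add_mul_sq {s : ℝ} (hs : 0 < s) (a x : ℝ) :
    a * x ≤ a ^ 2 / (4 * s) + s * x ^ 2 := by
  rw [div_add' _ _ _ (by positivity), le_div_iff₀ (by positivity)]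
  nlinarith [sq_nonneg (2 * s * x - a)]

theorem one_add_rpow_le_exp_mul {x m : ℝ} (hx : 0 ≤ 1 + x) (hm : 0 ≤ m) :
    (1 + x) ^ m ≤ rexp (m * x) := by
  calc (1 + x) ^ m ≤ rexp x ^ m := by gcongr; linarith [add_one_le_exp x]
    _ = rexp (m * x) := by rw [← exp_mul, mul_comm]

section
variable {V : Type*} [NormedAddCommGroup V] [InnerProductSpace ℝ V]

theorem exp_mul_sq_norm_add_smul_mul_exp (s c : ℝ) (y z : V) :
    rexp (s * ‖y + c • z‖ ^ 2) * rexp (-‖z‖ ^ 2 / 2) =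
      rexp (s * ‖y‖ ^ 2) * rexp (-((1 - 2 * s * c ^ 2) / 2) * ‖z‖ ^ 2 + 2 * s * c * ⟪y, z⟫) := by
  rw [← exp_add, ← exp_add, norm_add_sq_real, norm_smul, inner_smul_right, mul_pow,
    Real.norm_eq_abs, sq_abs]
  ring_nf

variable [FiniteDimensional ℝ V] [MeasurableSpace V] [BorelSpace V]

theorem integrable_exp_neg_mul_sq_norm_add_inner {b : ℝ} (hb : 0 < b) (c : ℝ) (w : V) :
    Integrable (fun v : V ↦ rexp (-b * ‖v‖ ^ 2 + c * ⟪w, v⟫)) := by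
  refine (GaussianFourier.integrable_cexp_neg_mul_sq_norm_add (V := V)
    (show 0 < (b : ℂ).re from hb) c w).norm.congr (Filter.Eventually.of_forall fun v ↦ ?_)
  simp only [Complex.norm_exp]
  norm_cast

theorem integral_exp_neg_mul_sq_norm_add_inner {b : ℝ} (hb : 0 < b) (c : ℝ) (w : V) :
    ∫ v : V, rexp (-b * ‖v‖ ^ 2 + c * ⟪w, v⟫) =
      (π / b) ^ (Module.finrank ℝ V / 2 : ℝ) * rexp (c ^ 2 * ‖w‖ ^ 2 / (4 * b)) := by
  rw [← Complex.ofReal_inj, ← integral_complex_ofReal]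
  push_cast
  rw [GaussianFourier.integral_cexp_neg_mul_sq_norm_add (show 0 < (b : ℂ).re from hb),
    Complex.ofReal_cpow (by positivity)]
  push_cast
  rfl

theorem integrable_exp_mul_sq_norm_add_smul_mul_exp {s c : ℝ} (hsc : 2 * s * c ^ 2 < 1) (y : V) :
    Integrable (fun z : V ↦ rexp (s * ‖y + c • z‖ ^ 2) * rexp (-‖z‖ ^ 2 / 2)) := by
  simp_rw [exp_mul_sq_norm_add_smul_mul_exp]
  exact (integrable_exp_neg_mul_sq_norm_add_inner (by linarith) _ y).const_mul _

theorem gaussian_integral_exp_mul_sq_norm_add_smul {s c : ℝ} (hsc : 2 * s * c ^ 2 < 1) (y : V) :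
    (2 * π) ^ (-(Module.finrank ℝ V : ℝ) / 2) *
        ∫ z : V, rexp (s * ‖y + c • z‖ ^ 2) * rexp (-‖z‖ ^ 2 / 2) =
      (1 - 2 * s * c ^ 2) ^ (-(Module.finrank ℝ V : ℝ) / 2) *
        rexp (s * ‖y‖ ^ 2 / (1 - 2 * s * c ^ 2)) := by
  have ht : 0 < 1 - 2 * s * c ^ 2 := by linarith
  simp_rw [exp_mul_sq_norm_add_smul_mul_exp, integral_const_mul,
    integral_exp_neg_mul_sq_norm_add_inner (half_pos ht)]
  set t := 1 - 2 * s * c ^ 2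
  set m : ℝ := Module.finrank ℝ V / 2
  have hpow : (2 * π) ^ (-m) * (π / (t / 2)) ^ m = t ^ (-m) := by
    rw [show π / (t / 2) = 2 * π * t⁻¹ by field_simp,
      mul_rpow (y := t⁻¹) (by positivity) (by positivity), inv_rpow ht.le,
      rpow_neg (by positivity), rpow_neg ht.le, inv_mul_cancel_left₀ (by positivity)]
  have hexp : rexp (s * ‖y‖ ^ 2) * rexp ((2 * s * c) ^ 2 * ‖y‖ ^ 2 / (4 * (t / 2))) =
      rexp (s * ‖y‖ ^ 2 / t) := by
    rw [← exp_add]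
    congr 1
    field_simp
    ring
  rw [neg_div, ← hpow, ← hexp]
  ring

theorem gaussian_integral_exp_mul_sqrt_one_add_sq_norm_le {q : ℝ} (hq : 0 < q) (a c : ℝ)
    (y : V) :
    (2 * π) ^ (-(Module.finrank ℝ V : ℝ) / 2) *
        ∫ z : V, rexp (a * √(1 + ‖y + c • z‖ ^ 2)) * rexp (-‖z‖ ^ 2 / 2) ≤
      rexp (a ^ 2 * c ^ 2 / 2 + a ^ 2 / (4 * q) +
        q * (1 + ‖y‖ ^ 2 + c ^ 2 * Module.finrank ℝ V)) := by
  set n : ℝ := (Module.finrank ℝ V : ℝ)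
  -- chosen so that `s / (1 - 2 s c²) = q`
  set s := q / (1 + 2 * q * c ^ 2)
  have hs : 0 < s := by positivity
  have hs_le : s ≤ q := div_le_self hq.le (by nlinarith [sq_nonneg c])
  have hsq : s * (1 + 2 * q * c ^ 2) = q := div_mul_cancel₀ q (by positivity)
  have ht : 1 - 2 * s * c ^ 2 = (1 + 2 * q * c ^ 2)⁻¹ :=
    eq_inv_of_mul_eq_one_left (by linear_combination (-2 * c ^ 2) * hsq)
  have hsc : 2 * s * c ^ 2 < 1 := by linarith [show 0 < (1 + 2 * q * c ^ 2)⁻¹ by positivity]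
  have hdom : ∀ z : V, rexp (a * √(1 + ‖y + c • z‖ ^ 2)) * rexp (-‖z‖ ^ 2 / 2) ≤
      rexp (a ^ 2 / (4 * s) + s) * (rexp (s * ‖y + c • z‖ ^ 2) * rexp (-‖z‖ ^ 2 / 2)) := by
    intro z
    rw [← mul_assoc]
    gcongr
    rw [← exp_add]
    gcongr
    have := mul_le_sq_div_add_mul_sq hs a √(1 + ‖y + c • z‖ ^ 2)
    rw [sq_sqrt (by positivity)] at this
    linarith
  calc (2 * π) ^ (-n / 2) * ∫ z : V, rexp (a * √(1 + ‖y + c • z‖ ^ 2)) * rexp (-‖z‖ ^ 2 / 2)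
      ≤ (2 * π) ^ (-n / 2) * ∫ z : V,
          rexp (a ^ 2 / (4 * s) + s) * (rexp (s * ‖y + c • z‖ ^ 2) * rexp (-‖z‖ ^ 2 / 2)) := by
        refine mul_le_mul_of_nonneg_left ?_ (by positivity)
        exact integral_mono_of_nonneg (.of_forall fun z ↦ by positivity)
          ((integrable_exp_mul_sq_norm_add_smul_mul_exp hsc y).const_mul _) (.of_forall hdom)
    _ = rexp (a ^ 2 / (4 * s) + s) *
          ((1 - 2 * s * c ^ 2) ^ (-n / 2) * rexp (s * ‖y‖ ^ 2 / (1 - 2 * s * c ^ 2))) := by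
        rw [integral_const_mul, mul_left_comm, gaussian_integral_exp_mul_sq_norm_add_smul hsc]
    _ = rexp (a ^ 2 / (4 * s) + s) * ((1 + 2 * q * c ^ 2) ^ (n / 2) * rexp (q * ‖y‖ ^ 2)) := by
        rw [ht, inv_rpow (by positivity), neg_div, rpow_neg (by positivity), inv_inv]
        congr 3
        field_simp
        linear_combination ‖y‖ ^ 2 * hsq
    _ ≤ rexp (a ^ 2 / (4 * s) + s) * (rexp (n / 2 * (2 * q * c ^ 2)) * rexp (q * ‖y‖ ^ 2)) := by
        gcongr
        exact one_add_rpow_le_exp_mul (by positivity) (by positivity)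
    _ ≤ rexp (a ^ 2 * c ^ 2 / 2 + a ^ 2 / (4 * q) + q * (1 + ‖y‖ ^ 2 + c ^ 2 * n)) := by
        have h4s : a ^ 2 / (4 * s) = a ^ 2 * c ^ 2 / 2 + a ^ 2 / (4 * q) := by
          field_simp
          linear_combination (-2 * a ^ 2) * hsq
        rw [← exp_add, ← exp_add, h4s]
        exact exp_le_exp.mpr (by linarith)
end

theorem gaussian_exp_lipschitz_moment_bound_general
    (d : ℕ) (y : EuclideanSpace ℝ (Fin d)) (a γ : ℝ)
    (ha : 0 < a) (hγ : 0 < γ) :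
    (2 * Real.pi) ^ (-(d : ℝ) / 2) *
        ∫ z : EuclideanSpace ℝ (Fin d),
          Real.exp (a * Real.sqrt (1 + ‖y + Real.sqrt (2 * γ) • z‖ ^ 2)) *
            Real.exp (-‖z‖ ^ 2 / 2)
      ≤ Real.exp (a ^ 2 * γ) *
          Real.exp (a * Real.sqrt (1 + ‖y‖ ^ 2 + 2 * γ * d)) := by
  set A := 1 + ‖y‖ ^ 2 + 2 * γ * d
  have hA : 0 < A := by positivity
  have hc : √(2 * γ) ^ 2 = 2 * γ := sq_sqrt (by positivity)
  have key := gaussian_integral_exp_mul_sqrt_one_add_sq_norm_le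
    (q := a / (2 * √A)) (by positivity) a √(2 * γ) y
  rw [finrank_euclideanSpace_fin, hc] at key
  refine key.trans_eq ?_
  rw [← exp_add]
  congr 1
  field_simp
  linear_combination (-4) * sq_sqrt hA.le

/-- Gaussian log-Sobolev/concentration bound:
(2π)^{-d/2} ∫ exp(a(1 + ‖y + √(2γ)z‖²)^{1/2}) e^{-‖z‖²/2} dz
  ≤ e^{a²γ} exp(a(1 + ‖y‖² + 2γd)^{1/2}). -/
theorem gaussian_exp_lipschitz_moment_bound
    (d : ℕ) (hd : 1 ≤ d) (y : EuclideanSpace ℝ (Fin d)) (a γ : ℝ)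
    (ha : 0 < a) (hγ : 0 < γ) :
    (2 * Real.pi) ^ (-(d : ℝ) / 2) *
        ∫ z : EuclideanSpace ℝ (Fin d),
          Real.exp (a * Real.sqrt (1 + ‖y + Real.sqrt (2 * γ) • z‖ ^ 2)) *
            Real.exp (-‖z‖ ^ 2 / 2)
      ≤ Real.exp (a ^ 2 * γ) *
          Real.exp (a * Real.sqrt (1 + ‖y‖ ^ 2 + 2 * γ * d)) :=
  gaussian_exp_lipschitz_moment_bound_general d y a γ ha hγ
end

section
/- Let d ≥ 1, γ > 0, κ > 0, and let x, h ∈ ℝ^d satisfy ⟨x, h⟩ − (γ/2)‖h‖² ≥ κ‖x‖. If M ≥ 2d/κ and ‖x‖ ≥ M, then (1 + ‖x − γh‖² + 2γd)^{1/2} ≤ (1 + ‖x‖²)^{1/2} − γκM/(2(1 + M²)^{1/2}). -/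
open RealInnerProductSpace

/-!
Expanding the square, `‖x - γh‖² = ‖x‖² - 2γ(⟪x, h⟫ - γ‖h‖²/2) ≤ ‖x‖² - 2γκ‖x‖`, and the noise
term `2γd ≤ γκM ≤ γκ‖x‖` eats at most half of this decrease, so the argument of the left-hand
square root is at most `s² - γκ‖x‖` with `s = √(1 + ‖x‖²)`. The tangent-line bound
`√(s² - a) ≤ s - a / (2s)` of the concave square root then gives a decrease of
`γκ‖x‖ / (2√(1 + ‖x‖²))`, which is at least `γκM / (2√(1 + M²))` because `t ↦ t / √(1 + t²)`
is increasing.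
-/

lemma norm_sub_smul_sq {E : Type*} [NormedAddCommGroup E] [InnerProductSpace ℝ E]
    (x h : E) (γ : ℝ) :
    ‖x - γ • h‖ ^ 2 = ‖x‖ ^ 2 - 2 * γ * (⟪x, h⟫ - γ / 2 * ‖h‖ ^ 2) := by
  rw [norm_sub_sq_real, real_inner_smul_right, norm_smul, mul_pow, Real.norm_eq_abs, sq_abs]
  ring

lemma Real.sqrt_sq_sub_le {s a : ℝ} (hs : 0 < s) (ha : a ≤ 2 * s ^ 2) :
    √(s ^ 2 - a) ≤ s - a / (2 * s) := by
  have hdiv : a / (2 * s) ≤ s := by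
    rw [div_le_iff₀ (by positivity)]
    linarith
  refine Real.sqrt_le_iff.2 ⟨by linarith, ?_⟩
  have hsq : (s - a / (2 * s)) ^ 2 = s ^ 2 - a + (a / (2 * s)) ^ 2 := by
    field_simp
    ring
  rw [hsq]
  linarith [sq_nonneg (a / (2 * s))]

lemma div_sqrt_one_add_sq_le_div_sqrt_one_add_sq {a b : ℝ} (ha : 0 ≤ a) (hab : a ≤ b) :
    a / √(1 + a ^ 2) ≤ b / √(1 + b ^ 2) := by
  have hb : 0 ≤ b := ha.trans hab
  rw [div_le_div_iff₀ (by positivity) (by positivity)]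
  rw [← pow_le_pow_iff_left₀ (by positivity) (by positivity) two_ne_zero, mul_pow, mul_pow,
    Real.sq_sqrt (by positivity), Real.sq_sqrt (by positivity)]
  nlinarith [mul_le_mul hab hab ha hb]

theorem euler_step_lyapunov_contraction_general
    (d : ℕ) (γ κ : ℝ) (hγ : 0 < γ) (hκ : 0 < κ)
    (x h : EuclideanSpace ℝ (Fin d))
    (hxh : κ * ‖x‖ ≤ ⟪x, h⟫ - γ / 2 * ‖h‖ ^ 2)
    (M : ℝ) (hM : 2 * d / κ ≤ M) (hx : M ≤ ‖x‖) :
    Real.sqrt (1 + ‖x - γ • h‖ ^ 2 + 2 * γ * d)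
      ≤ Real.sqrt (1 + ‖x‖ ^ 2) - γ * κ * M / (2 * Real.sqrt (1 + M ^ 2)) := by
  set s := √(1 + ‖x‖ ^ 2)
  have hs : 0 < s := Real.sqrt_pos.2 (by positivity)
  have hs_sq : s ^ 2 = 1 + ‖x‖ ^ 2 := Real.sq_sqrt (by positivity)
  have hM0 : 0 ≤ M := le_trans (by positivity) hM
  have hdM : 2 * (d : ℝ) ≤ κ * M := (div_le_iff₀' hκ).1 hM
  have hdecrease : 1 + ‖x - γ • h‖ ^ 2 + 2 * γ * d ≤ s ^ 2 - γ * κ * ‖x‖ := by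
    rw [norm_sub_smul_sq, hs_sq]
    nlinarith [mul_le_mul_of_nonneg_left hxh hγ.le, mul_le_mul_of_nonneg_left hdM hγ.le,
      mul_le_mul_of_nonneg_left hx (mul_pos hγ hκ).le]
  have hslope := div_sqrt_one_add_sq_le_div_sqrt_one_add_sq hM0 hx
  calc √(1 + ‖x - γ • h‖ ^ 2 + 2 * γ * d)
      ≤ √(s ^ 2 - γ * κ * ‖x‖) := Real.sqrt_le_sqrt hdecrease
    _ ≤ s - γ * κ * ‖x‖ / (2 * s) := Real.sqrt_sq_sub_le hs (by nlinarith [sq_nonneg ‖x - γ • h‖])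
    _ = s - γ * κ / 2 * (‖x‖ / s) := by ring
    _ ≤ s - γ * κ / 2 * (M / √(1 + M ^ 2)) := by gcongr
    _ = s - γ * κ * M / (2 * √(1 + M ^ 2)) := by ring

/-- If ⟨x, h⟩ − (γ/2)‖h‖² ≥ κ‖x‖, M ≥ 2d/κ and ‖x‖ ≥ M, then
(1 + ‖x − γh‖² + 2γd)^{1/2} ≤ (1 + ‖x‖²)^{1/2} − γκM/(2(1 + M²)^{1/2}). -/
theorem euler_step_lyapunov_contraction
    (d : ℕ) (hd : 1 ≤ d) (γ κ : ℝ) (hγ : 0 < γ) (hκ : 0 < κ)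
    (x h : EuclideanSpace ℝ (Fin d))
    (hxh : κ * ‖x‖ ≤ ⟪x, h⟫ - γ / 2 * ‖h‖ ^ 2)
    (M : ℝ) (hM : 2 * d / κ ≤ M) (hx : M ≤ ‖x‖) :
    Real.sqrt (1 + ‖x - γ • h‖ ^ 2 + 2 * γ * d)
      ≤ Real.sqrt (1 + ‖x‖ ^ 2) - γ * κ * M / (2 * Real.sqrt (1 + M ^ 2)) :=
  euler_step_lyapunov_contraction_general d γ κ hγ hκ x h hxh M hM hx
end

section
/- Let (E, ℰ) be a measurable space, R a Markov kernel on E, V : E → [1, ∞) measurable, and let a > 0, γ > 0, b ≥ 0 be such that for all x ∈ E, ∫ V(y) R(x, dy) ≤ e^{-a²γ} V(x) + γb. Then for all n ∈ ℕ and all x ∈ E, ∫ V(y) R^n(x, dy) ≤ e^{-a²nγ} V(x) + (b/a²) e^{a²γ}, where R^n denotes the n-fold composition of the kernel R (with R^0(x,·) the Dirac mass at x) and integrals are upper (Lebesgue) integrals. -/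
open MeasureTheory ProbabilityTheory ENNReal

/-- The n-fold composition of a Markov kernel with itself, with `R^0 = id`
(the Dirac/deterministic identity kernel). -/
noncomputable def kernelIterate {E : Type*} [MeasurableSpace E]
    (R : ProbabilityTheory.Kernel E E) : ℕ → ProbabilityTheory.Kernel E E
  | 0 => ProbabilityTheory.Kernel.id
  | n + 1 => (kernelIterate R n) ∘ₖ R

/-!
Iterating the drift inequality `RV ≤ qV + c` gives `RⁿV ≤ qⁿV + c(1 + q + ⋯ + qⁿ⁻¹)`.
For `q = e^{-s}` one has `s(1 + q + ⋯ + qⁿ⁻¹) ≤ e^s`, because `sq ≤ 1 - q` (that is, `s ≤ e^s - 1`)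
and `(1 - q)(1 + q + ⋯ + qⁿ⁻¹) ≤ 1`. With `s = a²γ` and `c = γb` the constant becomes `(b/a²)e^s`.
-/

open Finset

theorem lintegral_kernelIterate_le_geom_sum {E : Type*} [MeasurableSpace E]
    {R : Kernel E E} [IsMarkovKernel R] {V : E → ℝ≥0∞} (hV : Measurable V) {q c : ℝ≥0∞}
    (hdrift : ∀ x, ∫⁻ y, V y ∂(R x) ≤ q * V x + c) (n : ℕ) (x : E) :
    ∫⁻ y, V y ∂(kernelIterate R n x) ≤ q ^ n * V x + c * ∑ k ∈ range n, q ^ k := by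
  induction n generalizing x with
  | zero => simp [kernelIterate, Kernel.id_apply, lintegral_dirac' _ hV]
  | succ n ih =>
    calc ∫⁻ y, V y ∂(kernelIterate R (n + 1) x)
        = ∫⁻ y, ∫⁻ z, V z ∂(kernelIterate R n y) ∂(R x) := Kernel.lintegral_comp _ _ _ hV
      _ ≤ ∫⁻ y, (q ^ n * V y + c * ∑ k ∈ range n, q ^ k) ∂(R x) := lintegral_mono ih
      _ = q ^ n * ∫⁻ y, V y ∂(R x) + c * ∑ k ∈ range n, q ^ k := by
        rw [lintegral_add_right _ measurable_const, lintegral_const_mul _ hV, lintegral_const,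
          measure_univ, mul_one]
      _ ≤ q ^ n * (q * V x + c) + c * ∑ k ∈ range n, q ^ k := by gcongr; exact hdrift x
      _ = q ^ (n + 1) * V x + c * ∑ k ∈ range (n + 1), q ^ k := by
        rw [sum_range_succ]; ring

theorem mul_geom_sum_exp_neg_le (s : ℝ) (n : ℕ) :
    s * ∑ k ∈ range n, Real.exp (-s) ^ k ≤ Real.exp s := by
  set q := Real.exp (-s)
  have hq : 0 < q := Real.exp_pos _
  have hexp_mul_q : Real.exp s * q = 1 := by
    rw [← Real.exp_add, add_neg_cancel, Real.exp_zero]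
  have hsq : s * q ≤ 1 - q := by nlinarith [Real.add_one_le_exp s]
  have hsum : (1 - q) * ∑ k ∈ range n, q ^ k ≤ 1 := by
    rw [mul_neg_geom_sum]; linarith [pow_pos hq n]
  have hsum_nonneg : 0 ≤ ∑ k ∈ range n, q ^ k := sum_nonneg fun k _ => (pow_pos hq k).le
  calc s * ∑ k ∈ range n, q ^ k
      = Real.exp s * (s * q * ∑ k ∈ range n, q ^ k) := by
        linear_combination (s * ∑ k ∈ range n, q ^ k) * hexp_mul_q.symm
    _ ≤ Real.exp s * 1 := by
        gcongr; exact (mul_le_mul_of_nonneg_right hsq hsum_nonneg).trans hsum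
    _ = Real.exp s := mul_one _

theorem markov_kernel_iterated_drift_general
    {E : Type*} [MeasurableSpace E] (R : ProbabilityTheory.Kernel E E)
    [ProbabilityTheory.IsMarkovKernel R]
    (V : E → ℝ≥0∞) (hVmeas : Measurable V)
    (a γ b : ℝ) (ha : 0 < a) (hb : 0 ≤ b)
    (hdrift : ∀ x, ∫⁻ y, V y ∂(R x)
      ≤ ENNReal.ofReal (Real.exp (-a ^ 2 * γ)) * V x + ENNReal.ofReal (γ * b)) :
    ∀ (n : ℕ) (x : E), ∫⁻ y, V y ∂(kernelIterate R n x)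
      ≤ ENNReal.ofReal (Real.exp (-a ^ 2 * (n * γ))) * V x
          + ENNReal.ofReal (b / a ^ 2 * Real.exp (a ^ 2 * γ)) := by
  intro n x
  have hq : Real.exp (-a ^ 2 * γ) = Real.exp (-(a ^ 2 * γ)) := by rw [neg_mul]
  have hq_nonneg : 0 ≤ Real.exp (-(a ^ 2 * γ)) := (Real.exp_pos _).le
  have hpow : ENNReal.ofReal (Real.exp (-(a ^ 2 * γ))) ^ n
      = ENNReal.ofReal (Real.exp (-a ^ 2 * (n * γ))) := by
    rw [← ENNReal.ofReal_pow hq_nonneg, ← Real.exp_nat_mul]; ring_nf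
  have hsum : γ * b * ∑ k ∈ range n, Real.exp (-(a ^ 2 * γ)) ^ k
      ≤ b / a ^ 2 * Real.exp (a ^ 2 * γ) :=
    calc γ * b * ∑ k ∈ range n, Real.exp (-(a ^ 2 * γ)) ^ k
        = b / a ^ 2 * (a ^ 2 * γ * ∑ k ∈ range n, Real.exp (-(a ^ 2 * γ)) ^ k) := by
          field_simp
      _ ≤ b / a ^ 2 * Real.exp (a ^ 2 * γ) := by gcongr; exact mul_geom_sum_exp_neg_le _ n
  refine (lintegral_kernelIterate_le_geom_sum hVmeas hdrift n x).trans ?_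
  rw [hq, hpow]
  gcongr
  simp_rw [← ENNReal.ofReal_pow hq_nonneg]
  rw [← ENNReal.ofReal_sum_of_nonneg fun k _ => pow_nonneg hq_nonneg k,
    ← ENNReal.ofReal_mul' (sum_nonneg fun k _ => pow_nonneg hq_nonneg k)]
  exact ENNReal.ofReal_le_ofReal hsum

/-- If a Markov kernel R satisfies the one-step drift condition
∫ V dR(x,·) ≤ e^{-a²γ} V(x) + γb for a measurable V ≥ 1, then for all n,
∫ V dR^n(x,·) ≤ e^{-a²nγ} V(x) + (b/a²)e^{a²γ}. -/
theorem markov_kernel_iterated_drift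
    {E : Type*} [MeasurableSpace E] (R : ProbabilityTheory.Kernel E E)
    [ProbabilityTheory.IsMarkovKernel R]
    (V : E → ℝ≥0∞) (hVmeas : Measurable V) (hV1 : ∀ x, 1 ≤ V x)
    (a γ b : ℝ) (ha : 0 < a) (hγ : 0 < γ) (hb : 0 ≤ b)
    (hdrift : ∀ x, ∫⁻ y, V y ∂(R x)
      ≤ ENNReal.ofReal (Real.exp (-a ^ 2 * γ)) * V x + ENNReal.ofReal (γ * b)) :
    ∀ (n : ℕ) (x : E), ∫⁻ y, V y ∂(kernelIterate R n x)
      ≤ ENNReal.ofReal (Real.exp (-a ^ 2 * (n * γ))) * V x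
          + ENNReal.ofReal (b / a ^ 2 * Real.exp (a ^ 2 * γ)) :=
  markov_kernel_iterated_drift_general R V hVmeas a γ b ha hb hdrift
end

section
/- Let d ≥ 1 and let U : ℝ^d → ℝ be continuously differentiable with ∇U(0) = 0, satisfying: (i) Assumption A1 (there exist ℓ, L ≥ 0 with ‖∇U(x) − ∇U(y)‖ ≤ L(1 + ‖x‖^ℓ + ‖y‖^ℓ)‖x − y‖ for all x, y); (ii) ‖∇U(x)‖ → ∞ as ‖x‖ → ∞; (iii) there exist κ > 0 and M₁ ≥ 0 such that ⟨x, ∇U(x)⟩ ≥ κ‖x‖‖∇U(x)‖ whenever ‖x‖ ≥ M₁. Fix a > 0 and set V_a(x) = exp(a(1 + ‖x‖²)^{1/2}) and 𝒜V_a(x) = a V_a(x)[ −⟨∇U(x), x⟩(1 + ‖x‖²)^{-1/2} + a‖x‖²/(1 + ‖x‖²) + d(1 + ‖x‖²)^{-1/2} − ‖x‖²(1 + ‖x‖²)^{-3/2} ]. Then there exists b ≥ 0 such that for all x ∈ ℝ^d, 𝒜V_a(x) ≤ −a V_a(x) + a b. -/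
/-!
Radial alignment and coercivity of `∇U` make `⟪x, ∇U x⟫` eventually exceed every multiple of
`‖x‖`, so far out the drift term `-⟪∇U x, x⟫ / √(1 + ‖x‖²)` beats the bounded remaining terms
and `𝒜V_a + a V_a ≤ 0`. On the remaining compact set `𝒜V_a + a V_a` is continuous, hence bounded.
-/

open RealInnerProductSpace Filter Bornology

theorem Continuous.exists_nonneg_forall_le_of_eventually_nonpos {X : Type*} [TopologicalSpace X]
    {f : X → ℝ} (hf : Continuous f) (h : ∀ᶠ x in cocompact X, f x ≤ 0) :
    ∃ b, 0 ≤ b ∧ ∀ x, f x ≤ b := by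
  obtain ⟨K, hK, hKc⟩ := mem_cocompact.1 h
  obtain ⟨C, hC⟩ := hK.exists_bound_of_continuousOn hf.continuousOn
  refine ⟨max C 0, le_max_right _ _, fun x => ?_⟩
  by_cases hx : x ∈ K
  · exact (le_abs_self _).trans ((hC x hx).trans (le_max_left _ _))
  · exact (hKc hx).trans (le_max_right _ _)

theorem ContDiff.continuous_gradient {F : Type*} [NormedAddCommGroup F] [InnerProductSpace ℝ F]
    [CompleteSpace F] {f : F → ℝ} (hf : ContDiff ℝ 1 f) : Continuous (gradient f) :=
  (InnerProductSpace.toDual ℝ F).symm.continuous.comp (hf.continuous_fderiv one_ne_zero)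

theorem eventually_mul_norm_le_inner {E : Type*} [NormedAddCommGroup E] [InnerProductSpace ℝ E]
    {g : E → E} (hg : Tendsto (fun x => ‖g x‖) (cobounded E) atTop) {κ M : ℝ} (hκ : 0 < κ)
    (hrad : ∀ x, M ≤ ‖x‖ → κ * ‖x‖ * ‖g x‖ ≤ ⟪x, g x⟫) (c : ℝ) :
    ∀ᶠ x in cobounded E, c * ‖x‖ ≤ ⟪x, g x⟫ := by
  filter_upwards [tendsto_norm_cobounded_atTop.eventually_ge_atTop M,
    hg.eventually_ge_atTop (c / κ)] with x hxM hgx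
  calc c * ‖x‖ = κ * ‖x‖ * (c / κ) := by field_simp
    _ ≤ κ * ‖x‖ * ‖g x‖ := by gcongr
    _ ≤ ⟪x, g x⟫ := hrad x hxM

theorem sqrt_one_add_sq_le_two_mul {r : ℝ} (hr : 1 ≤ r) : √(1 + r ^ 2) ≤ 2 * r :=
  Real.sqrt_le_iff.2 ⟨by linarith, by nlinarith⟩

theorem drift_bracket_add_one_nonpos {a d r p : ℝ} (ha : 0 ≤ a) (hd : 0 ≤ d)
    (hp : (a + d + 1) * √(1 + r ^ 2) ≤ p) :
    -(p * (1 + r ^ 2) ^ (-(1 : ℝ) / 2)) + a * r ^ 2 / (1 + r ^ 2)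
      + d * (1 + r ^ 2) ^ (-(1 : ℝ) / 2) - r ^ 2 * (1 + r ^ 2) ^ (-(3 : ℝ) / 2) + 1 ≤ 0 := by
  have ht : 0 < 1 + r ^ 2 := by positivity
  have hs : 1 ≤ √(1 + r ^ 2) := Real.one_le_sqrt.2 (by nlinarith)
  have hhalf : (1 + r ^ 2) ^ (-(1 : ℝ) / 2) = (√(1 + r ^ 2))⁻¹ := by
    rw [neg_div, Real.rpow_neg ht.le, ← Real.sqrt_eq_rpow]
  have hfrac : a * r ^ 2 / (1 + r ^ 2) ≤ a :=
    div_le_of_le_mul₀ ht.le ha (by nlinarith)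
  have hdrift : a + d + 1 ≤ p * (√(1 + r ^ 2))⁻¹ := by
    rw [le_mul_inv_iff₀ (by linarith)]; exact hp
  have hdterm : d * (√(1 + r ^ 2))⁻¹ ≤ d := mul_le_of_le_one_right hd (inv_le_one_of_one_le₀ hs)
  have hlast : 0 ≤ r ^ 2 * (1 + r ^ 2) ^ (-(3 : ℝ) / 2) := by positivity
  rw [hhalf]
  linarith

theorem langevin_generator_drift_condition_general
    (d : ℕ) (U : EuclideanSpace ℝ (Fin d) → ℝ)
    (hU : ContDiff ℝ 1 U)
    (hinf : Filter.Tendsto (fun x : EuclideanSpace ℝ (Fin d) => ‖gradient U x‖)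
      (Filter.comap norm Filter.atTop) Filter.atTop)
    (κ : ℝ) (hκ : 0 < κ) (M₁ : ℝ)
    (hrad : ∀ x : EuclideanSpace ℝ (Fin d), M₁ ≤ ‖x‖ →
      κ * ‖x‖ * ‖gradient U x‖ ≤ ⟪x, gradient U x⟫)
    (a : ℝ) (ha : 0 < a) :
    ∃ b : ℝ, 0 ≤ b ∧
      ∀ x : EuclideanSpace ℝ (Fin d),
        a * Real.exp (a * Real.sqrt (1 + ‖x‖ ^ 2)) *
            (-(⟪gradient U x, x⟫ * (1 + ‖x‖ ^ 2) ^ (-(1 : ℝ) / 2))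
              + a * ‖x‖ ^ 2 / (1 + ‖x‖ ^ 2)
              + d * (1 + ‖x‖ ^ 2) ^ (-(1 : ℝ) / 2)
              - ‖x‖ ^ 2 * (1 + ‖x‖ ^ 2) ^ (-(3 : ℝ) / 2))
          ≤ -a * Real.exp (a * Real.sqrt (1 + ‖x‖ ^ 2)) + a * b := by
  set V := fun x : EuclideanSpace ℝ (Fin d) => Real.exp (a * Real.sqrt (1 + ‖x‖ ^ 2))
  set bracket := fun x : EuclideanSpace ℝ (Fin d) =>
    -(⟪gradient U x, x⟫ * (1 + ‖x‖ ^ 2) ^ (-(1 : ℝ) / 2)) + a * ‖x‖ ^ 2 / (1 + ‖x‖ ^ 2)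
      + d * (1 + ‖x‖ ^ 2) ^ (-(1 : ℝ) / 2) - ‖x‖ ^ 2 * (1 + ‖x‖ ^ 2) ^ (-(3 : ℝ) / 2)
  have hcont : Continuous fun x => a * V x * (bracket x + 1) := by
    have hg := hU.continuous_gradient
    have hrpow (p : ℝ) : Continuous fun x : EuclideanSpace ℝ (Fin d) => (1 + ‖x‖ ^ 2) ^ p :=
      (by fun_prop : Continuous fun x : EuclideanSpace ℝ (Fin d) => 1 + ‖x‖ ^ 2).rpow_const
        fun x => Or.inl (by positivity)
    simp only [V, bracket]
    fun_prop (disch := intro; positivity)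
  have hev : ∀ᶠ x in cocompact _, a * V x * (bracket x + 1) ≤ 0 := by
    rw [comap_norm_atTop] at hinf
    rw [← Metric.cobounded_eq_cocompact]
    filter_upwards [tendsto_norm_cobounded_atTop.eventually_ge_atTop 1,
      eventually_mul_norm_le_inner hinf hκ hrad (2 * (a + d + 1))] with x hx1 hx
    have hp : (a + d + 1) * √(1 + ‖x‖ ^ 2) ≤ ⟪gradient U x, x⟫ := by
      rw [real_inner_comm]
      calc _ ≤ (a + d + 1) * (2 * ‖x‖) := by gcongr; exact sqrt_one_add_sq_le_two_mul hx1
        _ = _ := by ring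
        _ ≤ _ := hx
    exact mul_nonpos_of_nonneg_of_nonpos (by positivity)
      (drift_bracket_add_one_nonpos ha.le d.cast_nonneg hp)
  obtain ⟨B, hB0, hB⟩ := hcont.exists_nonneg_forall_le_of_eventually_nonpos hev
  refine ⟨B / a, by positivity, fun x => ?_⟩
  have hx := hB x
  simp only [V, bracket] at hx
  rw [mul_div_cancel₀ _ ha.ne']
  linarith

/-- Foster–Lyapunov drift condition for the Langevin generator
applied to V_a(x) = exp(a(1 + ‖x‖²)^{1/2}): there exists b ≥ 0 such that
𝒜V_a(x) ≤ −a V_a(x) + ab, where 𝒜V_a is given by the explicit formula. -/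
theorem langevin_generator_drift_condition
    (d : ℕ) (hd : 1 ≤ d) (U : EuclideanSpace ℝ (Fin d) → ℝ)
    (hU : ContDiff ℝ 1 U) (h0 : gradient U 0 = 0)
    (ℓ L : ℝ) (hℓ : 0 ≤ ℓ) (hL : 0 ≤ L)
    (hlip : ∀ x y : EuclideanSpace ℝ (Fin d),
      ‖gradient U x - gradient U y‖ ≤ L * (1 + ‖x‖ ^ ℓ + ‖y‖ ^ ℓ) * ‖x - y‖)
    (hinf : Filter.Tendsto (fun x : EuclideanSpace ℝ (Fin d) => ‖gradient U x‖)
      (Filter.comap norm Filter.atTop) Filter.atTop)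
    (κ : ℝ) (hκ : 0 < κ) (M₁ : ℝ) (hM₁ : 0 ≤ M₁)
    (hrad : ∀ x : EuclideanSpace ℝ (Fin d), M₁ ≤ ‖x‖ →
      κ * ‖x‖ * ‖gradient U x‖ ≤ ⟪x, gradient U x⟫)
    (a : ℝ) (ha : 0 < a) :
    ∃ b : ℝ, 0 ≤ b ∧
      ∀ x : EuclideanSpace ℝ (Fin d),
        a * Real.exp (a * Real.sqrt (1 + ‖x‖ ^ 2)) *
            (-(⟪gradient U x, x⟫ * (1 + ‖x‖ ^ 2) ^ (-(1 : ℝ) / 2))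
              + a * ‖x‖ ^ 2 / (1 + ‖x‖ ^ 2)
              + d * (1 + ‖x‖ ^ 2) ^ (-(1 : ℝ) / 2)
              - ‖x‖ ^ 2 * (1 + ‖x‖ ^ 2) ^ (-(3 : ℝ) / 2))
          ≤ -a * Real.exp (a * Real.sqrt (1 + ‖x‖ ^ 2)) + a * b :=
  langevin_generator_drift_condition_general d U hU hinf κ hκ M₁ hrad a ha
end
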